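/- arXiv:2006.09670 — 5 statements merged into one kernel-verified Lean document; each statement's English description precedes it below -/
import Mathlib

section
/- An undirected graph is chordal if and only if it has a perfect elimination ordering, i.e., an ordering of its vertices such that for every vertex v, the set consisting of v together with its neighbors occurring earlier in the ordering forms a clique. -/
/-- A graph is chordal if every cycle of length at least four has a chord:
an edge of the graph connecting two vertices of the cycle that is not an edge of the cycle. -/
def IsChordal {V : Type*} (G : SimpleGraph V) : Prop :=
  ∀ ⦃v : V⦄ (c : G.Walk v v), c.IsCycle → 4 ≤ c.length →
    ∃ u w : V, u ∈ c.support ∧ w ∈ c.support ∧ G.Adj u w ∧ s(u, w) ∉ c.edges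

/-- A perfect elimination ordering: an ordering of the vertices such that every vertex
together with its neighbors occurring earlier in the ordering forms a clique. -/
def IsPEO {V : Type*} [Fintype V] (G : SimpleGraph V) (f : V ≃ Fin (Fintype.card V)) : Prop :=
  ∀ v : V, G.IsClique ({v} ∪ {u : V | G.Adj u v ∧ f u < f v})

/-!
A perfect elimination ordering produces chords directly: on a cycle of length at least four, the
two cycle-neighbours of the latest vertex come earlier, hence are adjacent, and they are not
consecutive on the cycle.

Conversely, a chordal graph has a simplicial vertex outside any clique that is not everything
(Dirac). If the vertex set `U` is not a clique, pick a non-universal vertex `a` whose closed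
neighbourhood contains the clique, and let `C` be a component of `U` minus that neighbourhood. The
neighbours of `a` adjacent to `C` form a clique `S`: two non-adjacent ones would close, through
`a` and a chordless path across `C`, a chordless cycle of length at least four. Induction on
`C ∪ S` with the clique `S` gives a simplicial vertex in `C`, which is simplicial in `U` as well.
Deleting simplicial vertices one at a time yields the ordering in reverse.
-/

namespace SimpleGraph.Walk

variable {V : Type*} {G : SimpleGraph V} {u v : V}

lemma IsCycle.mk_snd_penultimate_notMem_edges {c : G.Walk v v} (hc : c.IsCycle)
    (hlen : 4 ≤ c.length) : s(c.snd, c.penultimate) ∉ c.edges := by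
  rw [mk_mem_edges_iff_exists]
  rintro ⟨i, hi, heq⟩
  rcases Sym2.eq_iff.mp heq with ⟨h1, h2⟩ | ⟨h1, h2⟩
  · obtain rfl : i = 1 := hc.getVert_injOn' (by simp; omega) (by simp; omega) h1
    have := hc.getVert_injOn (by simp; omega) (by simp; omega) h2
    omega
  · obtain rfl : i = 0 := by
      have := hc.getVert_injOn (by simp; omega) (by simp; omega) h2
      omega
    have := hc.getVert_injOn' (by simp) (by simp) h1
    omega

lemma exists_shorter_of_adj_getVert (p : G.Walk u v) {i j : ℕ} (hij : i + 1 < j)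
    (hj : j ≤ p.length) (hadj : G.Adj (p.getVert i) (p.getVert j)) :
    ∃ q : G.Walk u v, q.length < p.length ∧ q.support ⊆ p.support := by
  refine ⟨(p.take i).append (cons hadj (p.drop j)), ?_, fun z hz => ?_⟩
  · simp only [length_append, take_length, length_cons, drop_length]
    omega
  · rw [mem_support_append_iff, support_cons, List.mem_cons] at hz
    rcases hz with hz | rfl | hz
    · exact (p.isSubwalk_take i).support_subset hz
    · exact p.getVert_mem_support i
    · exact (p.isSubwalk_drop j).support_subset hz

lemma exists_shorter_of_not_isChordless {p : G.Walk u v} (hp : ¬p.IsChordless) :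
    ∃ q : G.Walk u v, q.length < p.length ∧ q.support ⊆ p.support := by
  simp only [isChordless_iff_forall_mem_edges, not_forall] at hp
  obtain ⟨x, y, hx, hy, hxy, hnot⟩ := hp
  obtain ⟨i, rfl, hi⟩ := mem_support_iff_exists_getVert.mp hx
  obtain ⟨j, rfl, hj⟩ := mem_support_iff_exists_getVert.mp hy
  have hij : i ≠ j := fun h => hxy.ne (congrArg p.getVert h)
  rcases lt_or_ge (i + 1) j with h | h
  · exact p.exists_shorter_of_adj_getVert h hj hxy
  rcases lt_or_ge (j + 1) i with h' | h'
  · exact p.exists_shorter_of_adj_getVert h' hi hxy.symm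
  exfalso
  apply hnot
  rw [mk_mem_edges_iff_exists]
  rcases (by omega : j = i + 1 ∨ i = j + 1) with rfl | rfl
  · exact ⟨i, by omega, rfl⟩
  · exact ⟨j, by omega, Sym2.eq_swap⟩

lemma exists_isPath_isChordless_support_subset (p : G.Walk u v) :
    ∃ q : G.Walk u v, q.IsPath ∧ q.IsChordless ∧ q.support ⊆ p.support := by
  classical
  induction hn : p.length using Nat.strong_induction_on generalizing p with
  | _ n ih =>
  by_cases h : p.bypass.IsChordless
  · exact ⟨p.bypass, p.bypass_isPath, h, p.support_bypass_subset_support⟩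
  obtain ⟨q, hlt, hsub⟩ := exists_shorter_of_not_isChordless h
  obtain ⟨r, hr, hrc, hrsub⟩ := ih q.length (by have := p.length_bypass_le_length; omega) q rfl
  exact ⟨r, hr, hrc,
    List.Subset.trans hrsub (List.Subset.trans hsub p.support_bypass_subset_support)⟩

end SimpleGraph.Walk

section Chordal

open SimpleGraph Walk

variable {V : Type*} {G : SimpleGraph V}

lemma IsChordal.not_isChordless (hG : IsChordal G) {v : V} {c : G.Walk v v} (hc : c.IsCycle)
    (hlen : 4 ≤ c.length) : ¬c.IsChordless := fun h => by
  obtain ⟨u, w, hu, hw, huw, hnot⟩ := hG c hc hlen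
  exact hnot (h.mem_edges hu hw huw)

lemma IsChordal.exists_adj_of_isChordless (hG : IsChordal G) {a s t : V} {p : G.Walk s t}
    (hp : p.IsPath) (hpc : p.IsChordless) (hlen : 2 ≤ p.length) (ha : a ∉ p.support)
    (has : G.Adj a s) (hat : G.Adj a t) :
    ∃ w ∈ p.support, w ≠ s ∧ w ≠ t ∧ G.Adj a w := by
  by_contra! hw
  set c := cons has (p.concat hat.symm)
  have hcyc : c.IsCycle := by
    refine (cons_isCycle_iff _ _).mpr ⟨hp.concat ha hat.symm, fun h => ?_⟩
    rw [edges_concat, List.concat_eq_append, List.mem_append, List.mem_singleton] at h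
    rcases h with h | h
    · exact ha (p.fst_mem_support_of_mem_edges h)
    · rcases Sym2.eq_iff.mp h with ⟨rfl, -⟩ | ⟨-, rfl⟩
      · exact ha p.end_mem_support
      · rw [(isPath_iff_nil.mp hp).eq_nil] at hlen
        simp at hlen
  have hapex : ∀ z ∈ p.support, G.Adj a z → s(a, z) ∈ c.edges := by
    intro z hz haz
    by_cases hzs : z = s
    · subst hzs; simp [c]
    by_cases hzt : z = t
    · subst hzt; simp [c, Sym2.eq_swap]
    exact absurd haz (hw z hz hzs hzt)
  have hsupp : ∀ x ∈ c.support, x = a ∨ x ∈ p.support := by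
    simp only [c, support_cons, support_concat, List.mem_cons, List.mem_append]
    tauto
  refine hG.not_isChordless hcyc (by simp [c]; omega) (isChordless_iff_forall_mem_edges.mpr ?_)
  intro x y hx hy hxy
  rcases hsupp x hx with rfl | hxp <;> rcases hsupp y hy with rfl | hyp
  · exact absurd hxy (G.irrefl)
  · exact hapex y hyp hxy
  · exact Sym2.eq_swap ▸ hapex x hxp hxy.symm
  · simp [c, hpc.mem_edges hxp hyp hxy]

lemma IsChordal.adj_of_walk_avoiding_neighborSet (hG : IsChordal G) {a s t : V}
    (has : G.Adj a s) (hat : G.Adj a t) (hst : s ≠ t) (p : G.Walk s t) (hpa : a ∉ p.support)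
    (hp : ∀ z ∈ p.support, G.Adj a z → z = s ∨ z = t) : G.Adj s t := by
  by_contra hnadj
  obtain ⟨q, hq, hqc, hqp⟩ := p.exists_isPath_isChordless_support_subset
  have hlen : 2 ≤ q.length := by
    by_contra! h
    interval_cases hl : q.length
    · exact hst (eq_of_length_eq_zero hl)
    · exact hnadj (adj_of_length_eq_one hl)
  obtain ⟨w, hw, hws, hwt, haw⟩ :=
    hG.exists_adj_of_isChordless hq hqc hlen (fun h => hpa (hqp h)) has hat
  exact (hp w (hqp hw) haw).elim hws hwt

namespace SimpleGraph

def componentIn (G : SimpleGraph V) (W : Set V) (b : V) : Set V :=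
  {c | ∃ p : G.Walk b c, ∀ z ∈ p.support, z ∈ W}

variable {W : Set V} {b c c' : V}

lemma mem_componentIn : c ∈ G.componentIn W b ↔ ∃ p : G.Walk b c, ∀ z ∈ p.support, z ∈ W :=
  Iff.rfl

lemma componentIn_subset : G.componentIn W b ⊆ W :=
  fun c ⟨p, hp⟩ => hp c p.end_mem_support

lemma mem_componentIn_self (hb : b ∈ W) : b ∈ G.componentIn W b :=
  mem_componentIn.mpr ⟨Walk.nil, fun _ hz => List.mem_singleton.mp hz ▸ hb⟩

lemma mem_componentIn_of_adj (hc : c ∈ G.componentIn W b) (hc' : c' ∈ W) (hadj : G.Adj c c') :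
    c' ∈ G.componentIn W b := by
  obtain ⟨p, hp⟩ := hc
  refine ⟨p.concat hadj, fun z hz => ?_⟩
  rw [support_concat, List.mem_append, List.mem_singleton] at hz
  exact hz.elim (hp z) (· ▸ hc')

lemma exists_walk_of_mem_componentIn (hc : c ∈ G.componentIn W b)
    (hc' : c' ∈ G.componentIn W b) :
    ∃ p : G.Walk c c', ∀ z ∈ p.support, z ∈ W := by
  obtain ⟨p, hp⟩ := hc
  obtain ⟨p', hp'⟩ := hc'
  refine ⟨p.reverse.append p', fun z hz => ?_⟩
  rw [mem_support_append_iff, support_reverse, List.mem_reverse] at hz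
  exact hz.elim (hp z) (hp' z)

def IsSimplicialIn (G : SimpleGraph V) (U : Set V) (v : V) : Prop :=
  G.IsClique (U ∩ G.neighborSet v)

lemma IsSimplicialIn.of_subset {U U' : Set V} {v : V} (h : G.IsSimplicialIn U v)
    (hU : U' ∩ G.neighborSet v ⊆ U) : G.IsSimplicialIn U' v :=
  IsClique.subset (Set.subset_inter hU Set.inter_subset_right) h

lemma exists_not_adj_and_subset_insert_neighborSet {U K : Set V} (hU : ¬G.IsClique U)
    (hK : G.IsClique K) (hKU : K ⊆ U) :
    ∃ a ∈ U, ∃ b ∈ U, a ≠ b ∧ ¬G.Adj a b ∧ K ⊆ insert a (G.neighborSet a) := by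
  by_cases h : ∃ a ∈ K, ∃ b ∈ U, a ≠ b ∧ ¬G.Adj a b
  · obtain ⟨a, haK, b, hb, hab, hnadj⟩ := h
    exact ⟨a, hKU haK, b, hb, hab, hnadj,
      fun k hk => or_iff_not_imp_left.mpr fun hka => hK haK hk (Ne.symm hka)⟩
  push Not at h
  obtain ⟨a, ha, b, hb, hab, hnadj⟩ : ∃ a ∈ U, ∃ b ∈ U, a ≠ b ∧ ¬G.Adj a b := by
    simpa [IsClique, Set.Pairwise] using hU
  refine ⟨a, ha, b, hb, hab, hnadj, fun k hk => ?_⟩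
  rcases eq_or_ne k a with rfl | hka
  · exact Set.mem_insert k _
  · exact Or.inr (h k hk a ha hka).symm

end SimpleGraph

lemma IsChordal.isClique_separator (hG : IsChordal G) {a : V} {W : Set V}
    (hW : ∀ w ∈ W, w ≠ a ∧ ¬G.Adj a w) (b : V) :
    G.IsClique {s | G.Adj a s ∧ ∃ c ∈ G.componentIn W b, G.Adj c s} := by
  rintro s ⟨has, c, hc, hcs⟩ t ⟨hat, c', hc', hc't⟩ hst
  obtain ⟨q, hq⟩ := exists_walk_of_mem_componentIn hc hc'
  set p := cons hcs.symm (q.concat hc't)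
  have hsupp : ∀ z ∈ p.support, z = s ∨ z = t ∨ z ∈ W := by
    simp only [p, support_cons, support_concat, List.mem_cons, List.mem_append]
    grind
  refine hG.adj_of_walk_avoiding_neighborSet has hat hst p (fun h => ?_) fun z hz haz => ?_
  · rcases hsupp a h with h | h | h
    · exact has.ne h
    · exact hat.ne h
    · exact (hW a h).1 rfl
  · exact (hsupp z hz).imp_right (Or.resolve_right · fun h => (hW z h).2 haz)

theorem IsChordal.exists_isSimplicialIn (hG : IsChordal G) (U : Finset V) {K : Set V}
    (hK : G.IsClique K) (hKU : K ⊆ U) (hUK : ¬(U : Set V) ⊆ K) :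
    ∃ x ∈ U, x ∉ K ∧ G.IsSimplicialIn U x := by
  classical
  induction U using Finset.strongInduction generalizing K with
  | H U ih =>
  by_cases hU : G.IsClique (U : Set V)
  · obtain ⟨x, hxU, hxK⟩ := Set.not_subset.mp hUK
    exact ⟨x, hxU, hxK, hU.subset Set.inter_subset_left⟩
  obtain ⟨a, haU, b, hbU, hab, hnadj, hKa⟩ :=
    exists_not_adj_and_subset_insert_neighborSet hU hK hKU
  set W : Set V := {x | x ∈ U ∧ x ≠ a ∧ ¬G.Adj a x}
  have hW : ∀ w ∈ W, w ≠ a ∧ ¬G.Adj a w := fun w hw => hw.2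
  set C := G.componentIn W b
  set S := {s | G.Adj a s ∧ ∃ c ∈ C, G.Adj c s}
  set U' := U.filter (· ∈ C ∪ S)
  have hU' : U' ⊂ U := by
    refine (Finset.ssubset_iff_of_subset (Finset.filter_subset _ _)).mpr ⟨a, haU, ?_⟩
    rintro h
    rcases (Finset.mem_filter.mp h).2 with h | h
    · exact (hW a (componentIn_subset h)).1 rfl
    · exact G.irrefl h.1
  have hbU' : b ∈ U' :=
    Finset.mem_filter.mpr ⟨hbU, Or.inl (mem_componentIn_self ⟨hbU, hab.symm, hnadj⟩)⟩
  obtain ⟨x, hxU', hxS, hx⟩ := ih U' hU'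
    ((hG.isClique_separator hW b).subset Set.inter_subset_right) Set.inter_subset_left
    fun h => hnadj (h hbU').2.1
  have hxC : x ∈ C := (Finset.mem_filter.mp hxU').2.resolve_right fun h => hxS ⟨hxU', h⟩
  have hxW : x ∈ W := componentIn_subset hxC
  refine ⟨x, Finset.filter_subset _ _ hxU', fun hxK => ?_, hx.of_subset ?_⟩
  · rcases hKa hxK with rfl | h
    · exact hxW.2.1 rfl
    · exact hxW.2.2 h
  · rintro y ⟨hyU, hxy⟩
    refine Finset.mem_filter.mpr ⟨hyU, ?_⟩
    by_cases hay : G.Adj a y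
    · exact Or.inr ⟨hay, x, hxC, hxy⟩
    · have hyW : y ∈ W := ⟨hyU, fun h => hxW.2.2 (h ▸ hxy).symm, hay⟩
      exact Or.inl (mem_componentIn_of_adj hxC hyW hxy)

theorem IsChordal.exists_elimination_rank (hG : IsChordal G) (U : Finset V) :
    ∃ r : V → ℕ, Set.InjOn r U ∧ ∀ v ∈ U, G.IsSimplicialIn {u | u ∈ U ∧ r u < r v} v := by
  classical
  induction U using Finset.strongInduction with
  | H U ih =>
  rcases U.eq_empty_or_nonempty with rfl | hne
  · exact ⟨0, by simp, by simp⟩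
  obtain ⟨x, hxU, -, hx⟩ := hG.exists_isSimplicialIn U isClique_empty (Set.empty_subset _)
    (Finset.coe_nonempty.mpr hne).not_subset_empty
  obtain ⟨r, hr, hrs⟩ := ih (U.erase x) (Finset.erase_ssubset hxU)
  set r' := Function.update r x (U.sup r + 1)
  have hr'x : ∀ u ∈ U, u ≠ x → r' u < r' x := fun u hu hux => by
    simpa [r', hux, Nat.lt_succ_iff] using Finset.le_sup hu
  refine ⟨r', fun u hu v hv huv => ?_, fun v hv => ?_⟩
  · by_cases hux : u = x <;> by_cases hvx : v = x
    · rw [hux, hvx]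
    · exact absurd (hux ▸ huv) (hr'x v hv hvx).ne'
    · exact absurd (hvx ▸ huv) (hr'x u hu hux).ne
    · simp only [r', Function.update_of_ne hux, Function.update_of_ne hvx] at huv
      exact hr (Finset.mem_erase.mpr ⟨hux, hu⟩) (Finset.mem_erase.mpr ⟨hvx, hv⟩) huv
  by_cases hvx : v = x
  · subst hvx
    exact hx.of_subset fun u hu => hu.1.1
  refine (hrs v (Finset.mem_erase.mpr ⟨hvx, hv⟩)).of_subset ?_
  rintro u ⟨⟨huU, hlt⟩, -⟩
  have hux : u ≠ x := by
    rintro rfl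
    exact lt_asymm hlt (hr'x v hv hvx)
  simp only [r', Function.update_of_ne hux, Function.update_of_ne hvx] at hlt
  exact ⟨Finset.mem_erase.mpr ⟨hux, huU⟩, hlt⟩

lemma exists_equiv_fin_lt_iff [Fintype V] (r : V → ℕ) (hr : Function.Injective r) :
    ∃ f : V ≃ Fin (Fintype.card V), ∀ u v, f u < f v ↔ r u < r v := by
  let : LinearOrder V := LinearOrder.lift' r hr
  exact ⟨(Fintype.orderIsoFinOfCardEq V rfl).symm.toEquiv,
    fun u v => (Fintype.orderIsoFinOfCardEq V rfl).symm.lt_iff_lt⟩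

lemma isPEO_iff_forall_isSimplicialIn [Fintype V] {f : V ≃ Fin (Fintype.card V)} :
    IsPEO G f ↔ ∀ v, G.IsSimplicialIn {u | f u < f v} v := by
  refine forall_congr' fun v => ?_
  have : ({v} ∪ {u | G.Adj u v ∧ f u < f v} : Set V) =
      insert v ({u | f u < f v} ∩ G.neighborSet v) := by
    ext u
    simp [G.adj_comm, and_comm]
  rw [this, isClique_insert]
  exact ⟨And.left, fun h => ⟨h, fun u hu _ => hu.2⟩⟩

lemma IsPEO.isChordal [Fintype V] {f : V ≃ Fin (Fintype.card V)} (hf : IsPEO G f) :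
    IsChordal G := by
  classical
  intro u c hc hlen
  obtain ⟨v, hv, hmax⟩ := c.support.toFinset.exists_max_image f ⟨u, by simp⟩
  rw [List.mem_toFinset] at hv
  set c' := c.rotate v hv
  have hc' : c'.IsCycle := hc.rotate hv
  have hearlier : ∀ w, G.Adj v w → w ∈ c'.support → f w < f v := fun w hvw hw =>
    lt_of_le_of_ne (hmax w (by simpa [c'] using hw)) (f.injective.ne hvw.ne')
  have hsnd := c'.adj_snd hc'.not_nil
  have hpen := (c'.adj_penultimate hc'.not_nil).symm
  refine ⟨c'.snd, c'.penultimate, ?_, ?_, ?_, fun h => ?_⟩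
  · exact (c.mem_support_rotate_iff v hv).mp (c'.getVert_mem_support 1)
  · exact (c.mem_support_rotate_iff v hv).mp (c'.getVert_mem_support _)
  · exact isPEO_iff_forall_isSimplicialIn.mp hf v
      ⟨hearlier _ hsnd (c'.getVert_mem_support 1), hsnd⟩
      ⟨hearlier _ hpen (c'.getVert_mem_support _), hpen⟩ hc'.snd_ne_penultimate
  · exact hc'.mk_snd_penultimate_notMem_edges (by simpa [c'] using hlen)
      ((c.rotate_edges v hv).perm.mem_iff.mpr h)

end Chordal

/-- An undirected graph is chordal iff it has a perfect elimination ordering. -/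
theorem chordal_iff_exists_peo {V : Type*} [Fintype V] (G : SimpleGraph V) :
    IsChordal G ↔ ∃ f : V ≃ Fin (Fintype.card V), IsPEO G f := by
  refine ⟨fun hG => ?_, fun ⟨f, hf⟩ => hf.isChordal⟩
  obtain ⟨r, hr, hsimp⟩ := hG.exists_elimination_rank Finset.univ
  obtain ⟨f, hf⟩ := exists_equiv_fin_lt_iff r (Set.injOn_univ.mp (by simpa using hr))
  refine ⟨f, isPEO_iff_forall_isSimplicialIn.mpr fun v => ?_⟩
  simpa [hf] using hsimp v (Finset.mem_univ v)
end

section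
/- Let D be a DAG with no v-structures whose skeleton G is connected and chordal, and let v be a vertex of D. If b is a vertex not adjacent to v such that some path from v to b in G avoids the parents of v, and a is a parent of v adjacent to b, then the edge between a and b is directed a → b in D. -/
/-- A directed graph (relation) is acyclic if it has no directed cycles. -/
def Acyclic {V : Type*} (D : V → V → Prop) : Prop :=
  ∀ x : V, ¬ Relation.TransGen D x x

/-- The skeleton of a directed graph: forget edge directions. -/
def skeleton {V : Type*} (D : V → V → Prop) : SimpleGraph V where
  Adj x y := x ≠ y ∧ (D x y ∨ D y x)
  symm := ⟨fun x y ⟨hxy, h⟩ => ⟨hxy.symm, h.symm⟩⟩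
  loopless := ⟨fun x ⟨h, _⟩ => h rfl⟩

/-- `D` has no v-structures: any two distinct parents of a common child are adjacent
in the skeleton. -/
def NoVStructures {V : Type*} (D : V → V → Prop) : Prop :=
  ∀ x y z : V, D x y → D z y → x ≠ z → (skeleton D).Adj x z

/-!
Without v-structures, the set of descendants of `v` (including `v` itself) is closed under
passing to a skeleton neighbour that is not a parent of `v`: if `z → x` where `x` is reached
by `v → ⋯ → y → x`, then `z` is adjacent to `y` (or equal to it), and one walks back along
the directed path until reaching `v`, where the edge must point away from `v`. Hence `b` is a
descendant of `v`, and `b → a` would close the directed cycle `a → v → ⋯ → b → a`.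
-/

open Relation

namespace NoVStructures

variable {V : Type*} {D : V → V → Prop}

theorem reflTransGen_of_adj (hnov : NoVStructures D) {v x : V} (hx : ReflTransGen D v x) :
    ∀ {z : V}, (skeleton D).Adj x z → ¬ D z v → ReflTransGen D v z := by
  induction hx with
  | refl =>
    rintro z ⟨-, hvz | hzv⟩ hz
    · exact .single hvz
    · exact absurd hzv hz
  | @tail y x hvy hyx ih =>
    rintro z ⟨-, hxz | hzx⟩ hz
    · exact (hvy.tail hyx).tail hxz
    · by_cases hyz : y = z
      · exact hyz ▸ hvy
      · exact ih (hnov y x z hyx hzx hyz) hz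

theorem reflTransGen_of_walk (hnov : NoVStructures D) {v u b : V}
    (w : (skeleton D).Walk u b) (hu : ReflTransGen D v u) (hw : ∀ x ∈ w.support, ¬ D x v) :
    ReflTransGen D v b := by
  induction w with
  | nil => exact hu
  | cons hadj _ ih =>
    simp only [SimpleGraph.Walk.support_cons, List.mem_cons, forall_eq_or_imp] at hw
    exact ih (hnov.reflTransGen_of_adj hu hadj (hw.2 _ (SimpleGraph.Walk.start_mem_support _)))
      hw.2

end NoVStructures

theorem parent_to_nonneighbor_directed_general {V : Type*} (D : V → V → Prop)
    (hacyc : Acyclic D) (hnov : NoVStructures D)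
    (v b a : V)
    (hpath : ∃ w : (skeleton D).Walk v b, ∀ x ∈ w.support, ¬ D x v)
    (ha : D a v) (hab : (skeleton D).Adj a b) :
    D a b := by
  obtain ⟨w, hw⟩ := hpath
  have hvb : ReflTransGen D v b := hnov.reflTransGen_of_walk w .refl hw
  rcases hab.2 with hab | hba
  · exact hab
  · exact absurd (TransGen.head' ha (hvb.tail hba)) (hacyc a)

/-- If `b` is not adjacent to `v`, some path from `v` to `b` in the skeleton avoids the
parents of `v`, and `a` is a parent of `v` adjacent to `b`, then `a → b` in `D`. -/
theorem parent_to_nonneighbor_directed {V : Type*} (D : V → V → Prop)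
    (hacyc : Acyclic D) (hnov : NoVStructures D)
    (hconn : (skeleton D).Connected) (hchordal : IsChordal (skeleton D))
    (v b a : V)
    (hb : ¬ (skeleton D).Adj v b)
    (hpath : ∃ w : (skeleton D).Walk v b, ∀ x ∈ w.support, ¬ D x v)
    (ha : D a v) (hab : (skeleton D).Adj a b) :
    D a b :=
  parent_to_nonneighbor_directed_general D hacyc hnov v b a hpath ha hab
end

section
/- Let G be an undirected graph, v a vertex, P ⊆ ne(v), and u ∈ ne(v) \ P. Define A_R, D_R with respect to P and A_{R'}, D_{R'} with respect to P ∪ {u} as in the LazyIter decomposition, and M = A_{R'} \ A_R. Then D_{R'} = D_R \ M, and there are no edges in G between M and D_R \ M. -/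
/-- `P` separates `a` from `v` in `G`: every walk from `a` to `v` meets `P`. -/
def Separates {V : Type*} (G : SimpleGraph V) (P : Set V) (a v : V) : Prop :=
  ∀ w : G.Walk a v, ∃ x ∈ w.support, x ∈ P

/-- The set `A` of the LazyIter decomposition with respect to parent set `P`. -/
def Aset {V : Type*} (G : SimpleGraph V) (v : V) (P : Set V) : Set V :=
  {a : V | a ∉ G.neighborSet v ∧ a ≠ v ∧ Separates G P a v}

/-- The set `D` of the LazyIter decomposition with respect to parent set `P`. -/
def Dset {V : Type*} (G : SimpleGraph V) (v : V) (P : Set V) : Set V :=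
  Set.univ \ (Aset G v P ∪ (G.neighborSet v \ P) ∪ P ∪ {v})

/-- With `M = A' \ A`, we have `D' = D \ M`, and there are no edges of `G` between `M`
and `D \ M`. -/
theorem lazyiter_update {V : Type*} (G : SimpleGraph V) (v u : V) (P : Set V)
    (hP : P ⊆ G.neighborSet v) (hu : u ∈ G.neighborSet v) (huP : u ∉ P)
    (M : Set V) (hM : M = Aset G v (P ∪ {u}) \ Aset G v P) :
    Dset G v (P ∪ {u}) = Dset G v P \ M ∧
      ∀ a ∈ M, ∀ b ∈ Dset G v P \ M, ¬ G.Adj a b := by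
  have hPu : P ∪ {u} ⊆ G.neighborSet v := by
    rintro x (hx | rfl)
    · exact hP hx
    · exact hu
  have hsub : Aset G v P ⊆ Aset G v (P ∪ {u}) := by
    rintro a ⟨h1, h2, h3⟩
    exact ⟨h1, h2, fun w => (h3 w).imp fun x ⟨hx, hxP⟩ => ⟨hx, Or.inl hxP⟩⟩
  have hD : ∀ Q : Set V, Q ⊆ G.neighborSet v → ∀ b : V,
      b ∈ Dset G v Q ↔ b ∉ Aset G v Q ∧ b ∉ G.neighborSet v ∧ b ≠ v := by
    intro Q hQ b
    simp only [Dset, Set.mem_diff, Set.mem_univ, true_and, Set.mem_union,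
      Set.mem_singleton_iff]
    constructor
    · intro h
      push_neg at h
      obtain ⟨⟨⟨hA, hne⟩, hQ'⟩, hv⟩ := h
      exact ⟨hA, fun hb => hQ' (hne hb), hv⟩
    · rintro ⟨hA, hne, hv⟩
      rintro (((h | ⟨h, _⟩) | h) | h)
      · exact hA h
      · exact hne h
      · exact hne (hQ h)
      · exact hv h
  subst hM
  constructor
  · ext b
    rw [hD _ hPu, Set.mem_diff, hD _ hP]
    constructor
    · rintro ⟨hA', hne, hv⟩
      exact ⟨⟨fun h => hA' (hsub h), hne, hv⟩, fun h => hA' h.1⟩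
    · rintro ⟨⟨hA, hne, hv⟩, hM⟩
      refine ⟨fun h => hM ⟨h, hA⟩, hne, hv⟩
  · rintro a ⟨⟨hane, hav, hsep⟩, haA⟩ b hb hadj
    have hb' : b ∈ Dset G v (P ∪ {u}) := by
      rw [hD _ hPu]
      rw [Set.mem_diff, hD _ hP] at hb
      exact ⟨fun h => hb.2 ⟨h, hb.1.1⟩, hb.1.2.1, hb.1.2.2⟩
    rw [hD _ hPu] at hb'
    obtain ⟨hbA', hbne, hbv⟩ := hb'
    have : ¬ Separates G (P ∪ {u}) b v := fun h => hbA' ⟨hbne, hbv, h⟩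
    simp only [Separates, not_forall, not_exists] at this
    obtain ⟨w, hw⟩ := this
    push_neg at hw
    obtain ⟨x, hx, hxP⟩ := hsep (SimpleGraph.Walk.cons hadj w)
    rw [SimpleGraph.Walk.support_cons, List.mem_cons] at hx
    rcases hx with rfl | hx
    · exact hane (hPu hxP)
    · exact hw x hx hxP
end

section
/- Let G be a connected undirected graph, v a vertex, and P ⊆ ne(v). Then for every vertex d ∈ D_R (i.e., d ∉ A_R ∪ C_R ∪ P ∪ {v}), there exists a path from d to v in the induced subgraph G[V \ A_R]. -/
/-- For every `d ∈ D_R` there is a path from `d` to `v` avoiding `A_R` entirely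
(i.e. a path in `G[V \ A_R]`). -/
theorem path_avoiding_A {V : Type*} (G : SimpleGraph V) (hconn : G.Connected)
    (v : V) (P : Set V) (hP : P ⊆ G.neighborSet v)
    (A C D : Set V)
    (hA : A = {a : V | a ∉ G.neighborSet v ∧ a ≠ v ∧ Separates G P a v})
    (hC : C = G.neighborSet v \ P)
    (hD : D = Set.univ \ (A ∪ C ∪ P ∪ {v})) :
    ∀ d ∈ D, ∃ w : G.Walk d v, ∀ x ∈ w.support, x ∉ A := by
  classical
  intro d hd
  subst hA hC hD
  simp only [Set.mem_diff, Set.mem_univ, Set.mem_union, Set.mem_singleton_iff, true_and,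
    not_or] at hd
  obtain ⟨⟨⟨hdA, hdC⟩, hdP⟩, hdv⟩ := hd
  have hdnv : d ∉ G.neighborSet v := fun h => hdC ⟨h, hdP⟩
  have hnsep : ¬ Separates G P d v := fun hs => hdA ⟨hdnv, hdv, hs⟩
  rw [Separates] at hnsep
  push_neg at hnsep
  obtain ⟨w, hw⟩ := hnsep
  refine ⟨w, fun x hx hxA => ?_⟩
  obtain ⟨-, -, hsep⟩ := hxA
  obtain ⟨y, hy, hyP⟩ := hsep (w.dropUntil x hx)
  exact hw y (SimpleGraph.Walk.support_dropUntil_subset w hx hy) hyP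
end

section
/- Let G be a connected undirected chordal graph and let σ be a lexicographic BFS ordering of its vertices. Orienting each edge of G from the earlier endpoint to the later endpoint in σ yields a DAG with no v-structures. -/
/-- `σ` is a lexicographic BFS ordering of `G` (4-point characterization): whenever
`σ a < σ b < σ c`, `a` is adjacent to `c` but not to `b`, there is some `d` visited
before `a` that is adjacent to `b` but not to `c`. -/
def IsLexBFSOrder {V : Type*} [Fintype V] (G : SimpleGraph V)
    (σ : V ≃ Fin (Fintype.card V)) : Prop :=
  ∀ a b c : V, σ a < σ b → σ b < σ c → G.Adj a c → ¬ G.Adj a b →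
    ∃ d : V, σ d < σ a ∧ G.Adj d b ∧ ¬ G.Adj d c

/-!
Call a chordless path `u - x - ⋯ - v` *bad* if `x ≠ v`, `u` comes first in `σ` and `v` comes
first among the other vertices. The four-point condition applied to `u < v < x` gives `d` before
`u` adjacent to `v` but not to `x`. Let `w` be the first neighbour of `d` on the way from `x` to
`v`. If `d ~ u`, then `u - x - ⋯ - w - d - u` is a chordless cycle of length at least four;
otherwise `d - w - ⋯ - x - u` is again bad, with an earlier first vertex. So there is no bad path.
For `σ x < σ z < σ y` with `x ~ y ~ z` and `x ≁ z`, the path `x - y - z` would be bad, hence the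
parents of every vertex form a clique; acyclicity holds because every edge points forward in `σ`.
-/

namespace SimpleGraph.Walk

variable {V : Type*} {G : SimpleGraph V} {u v w x d : V}

theorem isChordless_nil : (nil : G.Walk u u).IsChordless := by
  simp [isChordless_iff_forall_mem_edges]

theorem isChordless_cons_iff (h : G.Adj u x) {p : G.Walk x v} (hu : u ∉ p.support) :
    (cons h p).IsChordless ↔ p.IsChordless ∧ ∀ y ∈ p.support, G.Adj u y → y = x := by
  simp only [isChordless_iff_forall_mem_edges, support_cons, edges_cons, List.mem_cons]
  constructor
  · intro hc
    refine ⟨fun a b ha hb hab => ?_, fun y hy huy => ?_⟩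
    · refine (hc (.inr ha) (.inr hb) hab).resolve_left fun e => ?_
      have : u ∈ s(a, b) := e ▸ Sym2.mem_mk_left u x
      rcases Sym2.mem_iff.1 this with rfl | rfl <;> contradiction
    · rcases hc (.inl rfl) (.inr hy) huy with e | e
      · exact Sym2.congr_right.1 e
      · exact absurd (p.fst_mem_support_of_mem_edges e) hu
  · rintro ⟨hc, hux⟩ a b (rfl | ha) (rfl | hb) hab
    · exact absurd hab (G.loopless.irrefl _)
    · exact .inl (by rw [hux b hb hab])
    · exact .inl (by rw [hux a ha hab.symm, Sym2.eq_swap])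
    · exact .inr (hc ha hb hab)

theorem IsChordless.reverse {p : G.Walk u v} (hp : p.IsChordless) : p.reverse.IsChordless := by
  simpa only [isChordless_iff_forall_mem_edges, support_reverse, edges_reverse,
    List.mem_reverse] using hp

theorem isChordless_cons_concat (h : G.Adj d u) {p : G.Walk u w} (h' : G.Adj w d)
    (hp : p.IsChordless) (hd : ∀ y ∈ p.support, G.Adj d y → y = u ∨ y = w) :
    (cons h (p.concat h')).IsChordless := by
  rw [isChordless_iff_forall_mem_edges] at hp ⊢
  have hmem : ∀ y ∈ (cons h (p.concat h')).support, y = d ∨ y ∈ p.support := by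
    simp only [support_cons, support_concat, List.mem_cons, List.mem_append]
    tauto
  have hdu : s(d, u) ∈ (cons h (p.concat h')).edges := by simp
  have hwd : s(d, w) ∈ (cons h (p.concat h')).edges := by simp [edges_concat, Sym2.eq_swap]
  have hpe : p.edges ⊆ (cons h (p.concat h')).edges := by simp [edges_concat]
  intro a b ha hb hab
  rcases hmem a ha with rfl | ha' <;> rcases hmem b hb with rfl | hb'
  · exact absurd hab (G.loopless.irrefl _)
  · rcases hd b hb' hab with rfl | rfl <;> assumption
  · rw [Sym2.eq_swap]
    rcases hd a ha' hab.symm with rfl | rfl <;> assumption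
  · exact hpe (hp ha' hb' hab)

theorem exists_chordless_subpath_to_first (S : V → Prop) :
    ∀ {u v : V} (p : G.Walk u v), p.IsPath → p.IsChordless → S v →
      ∃ w, S w ∧ ∃ q : G.Walk u w, q.IsPath ∧ q.IsChordless ∧ q.support ⊆ p.support ∧
        ∀ y ∈ q.support, S y → y = w
  | u, _, nil, _, _, hv => ⟨u, hv, nil, .nil, isChordless_nil, by simp, by simp⟩
  | u, v, cons h p, hp, hc, hv => by
    by_cases hu : S u
    · exact ⟨u, hu, nil, .nil, isChordless_nil, by simp, by simp⟩
    rw [cons_isPath_iff] at hp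
    rw [isChordless_cons_iff h hp.2] at hc
    obtain ⟨w, hw, q, hq, hqc, hqp, hfirst⟩ := exists_chordless_subpath_to_first S p hp.1 hc.1 hv
    have huq : u ∉ q.support := fun h => hp.2 (hqp h)
    refine ⟨w, hw, cons h q, hq.cons huq, ?_, ?_, ?_⟩
    · exact (isChordless_cons_iff h huq).2 ⟨hqc, fun y hy => hc.2 y (hqp hy)⟩
    · simpa using List.cons_subset_cons u hqp
    · simp only [support_cons, List.mem_cons, forall_eq_or_imp]
      exact ⟨fun h => absurd h hu, hfirst⟩

end SimpleGraph.Walk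

section

open SimpleGraph Walk

variable {V : Type*} {G : SimpleGraph V}

theorem IsChordal.not_adj_of_isChordless {u w d : V} (hG : IsChordal G) {p : G.Walk u w}
    (hp : p.IsPath) (hpc : p.IsChordless) (hlen : 2 ≤ p.length) (hdp : d ∉ p.support)
    (hdw : G.Adj d w) (hd : ∀ y ∈ p.support, G.Adj d y → y = u ∨ y = w) : ¬ G.Adj d u := by
  intro hdu
  have huw : u ≠ w := by
    rintro rfl
    exact not_nil_iff_lt_length.2 (by omega) (isPath_iff_nil.1 hp)
  have hcycle : (cons hdu (p.concat hdw.symm)).IsCycle := by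
    refine (cons_isCycle_iff _ _).2 ⟨hp.concat hdp _, fun he => ?_⟩
    rw [edges_concat, List.concat_eq_append, List.mem_append, List.mem_singleton] at he
    rcases he with he | he
    · exact hdp (p.fst_mem_support_of_mem_edges he)
    · rcases Sym2.eq_iff.1 he with ⟨rfl, -⟩ | ⟨-, rfl⟩
      · exact hdp p.end_mem_support
      · exact huw rfl
  obtain ⟨a, b, ha, hb, hab, hnot⟩ :=
    hG _ hcycle (by simp only [length_cons, length_concat]; omega)
  exact hnot ((isChordless_cons_concat hdu hdw.symm hpc hd).mem_edges ha hb hab)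

theorem IsLexBFSOrder.eq_of_isChordless [Fintype V] {σ : V ≃ Fin (Fintype.card V)}
    (hσ : IsLexBFSOrder G σ) (hG : IsChordal G) {u x v : V} (h : G.Adj u x) (p : G.Walk x v)
    (hp : p.IsPath) (hpc : p.IsChordless) (hu : ∀ y ∈ p.support, G.Adj u y → y = x)
    (hσu : ∀ y ∈ p.support, σ u < σ y) (hσv : ∀ y ∈ p.support, σ v ≤ σ y) : x = v := by
  by_contra hxv
  obtain ⟨d, hσd, hdv, hdx⟩ := hσ u v x (hσu v p.end_mem_support)
    (lt_of_le_of_ne (hσv x p.start_mem_support) (σ.injective.ne (Ne.symm hxv))) h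
    (fun huv => hxv (hu v p.end_mem_support huv).symm)
  obtain ⟨w, hdw, q, hq, hqc, hqp, hfirst⟩ :=
    exists_chordless_subpath_to_first (G.Adj d) p hp hpc hdv
  have huq : u ∉ q.support := fun hu' => lt_irrefl _ (hσu u (hqp hu'))
  have hq'c : (cons h q).IsChordless :=
    (isChordless_cons_iff h huq).2 ⟨hqc, fun y hy => hu y (hqp hy)⟩
  have hσq' : ∀ y ∈ (cons h q).support, σ u ≤ σ y := by
    simp only [support_cons, List.mem_cons, forall_eq_or_imp]
    exact ⟨le_rfl, fun y hy => (hσu y (hqp hy)).le⟩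
  have hxw : x ≠ w := by
    rintro rfl
    exact hdx hdw
  have hdu : ¬ G.Adj d u := by
    refine hG.not_adj_of_isChordless (hq.cons huq) hq'c ?_ ?_ hdw ?_
    · have := not_nil_iff_lt_length.1 (mt hq.nil_iff_eq.1 hxw)
      rw [length_cons]
      omega
    · exact fun hd => absurd (hσq' d hd) (not_le.2 hσd)
    · intro y hy hdy
      rcases List.mem_cons.1 hy with rfl | hy
      · exact .inl rfl
      · exact .inr (hfirst y hy hdy)
  have hwu : w = u := by
    refine hσ.eq_of_isChordless hG hdw (cons h q).reverse (hq.cons huq).reverse hq'c.reverse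
      ?_ ?_ ?_
    · simp only [support_reverse, List.mem_reverse, support_cons, List.mem_cons, forall_eq_or_imp]
      exact ⟨fun hdu' => absurd hdu' hdu, hfirst⟩
    · simp only [support_reverse, List.mem_reverse]
      exact fun y hy => lt_of_lt_of_le hσd (hσq' y hy)
    · simpa only [support_reverse, List.mem_reverse] using hσq'
  exact lt_irrefl _ (hwu ▸ hσu w (hqp q.end_mem_support))
termination_by (σ u : ℕ)
decreasing_by exact hσd

theorem IsLexBFSOrder.adj_of_lt_of_lt [Fintype V] {σ : V ≃ Fin (Fintype.card V)}
    (hσ : IsLexBFSOrder G σ) (hG : IsChordal G) {x y z : V} (hxz : σ x < σ z) (hzy : σ z < σ y)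
    (hxy : G.Adj x y) (hzy' : G.Adj z y) : G.Adj x z := by
  by_contra hxz'
  refine hzy'.ne (hσ.eq_of_isChordless hG hxy hzy'.symm.toWalk hzy'.symm.isPath_toWalk
    hzy'.symm.isChordless_toWalk ?_ ?_ ?_).symm
  all_goals simp only [Adj.support_toWalk, List.mem_cons, List.not_mem_nil, or_false,
    forall_eq_or_imp, forall_eq]
  · exact ⟨fun _ => trivial, fun h => absurd h hxz'⟩
  · exact ⟨hxz.trans hzy, hxz⟩
  · exact ⟨hzy.le, le_rfl⟩

end

theorem lexbfs_orientation_dag_no_vstructures_general {V : Type*} [Fintype V]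
    (G : SimpleGraph V) (hchordal : IsChordal G)
    (σ : V ≃ Fin (Fintype.card V)) (hσ : IsLexBFSOrder G σ)
    (D : V → V → Prop) (hD : ∀ x y : V, D x y ↔ G.Adj x y ∧ σ x < σ y) :
    (∀ x : V, ¬ Relation.TransGen D x x) ∧
      (∀ x y z : V, D x y → D z y → x ≠ z → G.Adj x z) := by
  refine ⟨fun x hx => ?_, fun x y z hxy hzy hxz => ?_⟩
  · have hlt : Relation.TransGen (· < ·) (σ x) (σ x) :=
      Relation.TransGen.lift σ (fun a b hab => ((hD a b).1 hab).2) x x hx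
    rw [Relation.transGen_eq_self] at hlt
    exact lt_irrefl _ hlt
  · obtain ⟨hxy, hσxy⟩ := (hD x y).1 hxy
    obtain ⟨hzy, hσzy⟩ := (hD z y).1 hzy
    rcases lt_trichotomy (σ x) (σ z) with h | h | h
    · exact hσ.adj_of_lt_of_lt hchordal h hσzy hxy hzy
    · exact absurd (σ.injective h) hxz
    · exact (hσ.adj_of_lt_of_lt hchordal h hσxy hzy hxy).symm

/-- Orienting each edge of a connected chordal graph from the earlier to the later
endpoint of a LexBFS ordering yields a DAG with no v-structures. -/
theorem lexbfs_orientation_dag_no_vstructures {V : Type*} [Fintype V]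
    (G : SimpleGraph V) (hconn : G.Connected) (hchordal : IsChordal G)
    (σ : V ≃ Fin (Fintype.card V)) (hσ : IsLexBFSOrder G σ)
    (D : V → V → Prop) (hD : ∀ x y : V, D x y ↔ G.Adj x y ∧ σ x < σ y) :
    (∀ x : V, ¬ Relation.TransGen D x x) ∧
      (∀ x y z : V, D x y → D z y → x ≠ z → G.Adj x z) :=
  lexbfs_orientation_dag_no_vstructures_general G hchordal σ hσ D hD
end
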